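/- arXiv:1407.5750 — 2 statements merged into one kernel-verified Lean document; each statement's English description precedes it below -/
import Mathlib

section
/- Let n : ℕ → ℕ be a sequence with n(0) ≥ 1, n(1) ≥ 2, and n(k) ≥ n(k−2) + n(k−3) + ⋯ + n(0) + 2 for every k ≥ 2. Then for every natural number k, n(k) ≥ φ^k, where φ = (1 + √5)/2 is the golden ratio. -/
/-!
Since `φ² = φ + 1`, the geometric sum `1 + φ + ⋯ + φ^k` telescopes to `φ^(k+2) - φ`, so the
powers of `φ` satisfy the recurrence with equality when the constant `2` is replaced by `φ`.
As `φ < 2`, strong induction on `k` gives `n k ≥ φ^k`.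
-/

open Finset Real goldenRatio

theorem geom_sum_goldenRatio (m : ℕ) : ∑ j ∈ range m, φ ^ j = φ ^ (m + 1) - φ := by
  induction m with
  | zero => simp
  | succ m ih =>
    rw [sum_range_succ, ih, ← goldenRatio_pow_sub_goldenRatio_pow m]
    ring

theorem goldenRatio_pow_le_of_goldenRatio_add_sum_le (a : ℕ → ℝ) (h0 : 1 ≤ a 0) (h1 : φ ≤ a 1)
    (hsum : ∀ k, φ + ∑ j ∈ range (k + 1), a j ≤ a (k + 2)) (k : ℕ) : φ ^ k ≤ a k := by
  induction k using Nat.strong_induction_on with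
  | _ k ih =>
    match k with
    | 0 => simpa using h0
    | 1 => simpa using h1
    | k + 2 =>
      have hpow : ∑ j ∈ range (k + 1), φ ^ j ≤ ∑ j ∈ range (k + 1), a j :=
        sum_le_sum fun j hj => ih j (by grind)
      calc φ ^ (k + 2) = φ + ∑ j ∈ range (k + 1), φ ^ j := by rw [geom_sum_goldenRatio]; ring
        _ ≤ φ + ∑ j ∈ range (k + 1), a j := by gcongr
        _ ≤ a (k + 2) := hsum k

/-- If `n 0 ≥ 1`, `n 1 ≥ 2`, and `n k ≥ n (k-2) + n (k-3) + ⋯ + n 0 + 2`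
for every `k ≥ 2`, then `n k ≥ φ^k` for every `k`, where `φ = (1 + √5)/2`
is the golden ratio. -/
theorem ge_goldenRatio_pow_of_ge_sum (n : ℕ → ℕ)
    (h0 : n 0 ≥ 1) (h1 : n 1 ≥ 2)
    (hsum : ∀ k, 2 ≤ k → n k ≥ 2 + ∑ j ∈ Finset.range (k - 1), n j) :
    ∀ k, (n k : ℝ) ≥ ((1 + Real.sqrt 5) / 2) ^ k := by
  refine goldenRatio_pow_le_of_goldenRatio_add_sum_le (fun k => n k) (by exact_mod_cast h0)
    (goldenRatio_lt_two.le.trans (by exact_mod_cast h1)) fun k => ?_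
  have hk : 2 + ∑ j ∈ range (k + 1), (n j : ℝ) ≤ n (k + 2) := by
    exact_mod_cast hsum (k + 2) (by omega)
  linarith [goldenRatio_lt_two]
end

section
/- Let T be a finite rooted tree equipped with a rank labeling r assigning a natural number to each node, and suppose that for every node v of T there exist r(v) pairwise distinct children c_1, …, c_{r(v)} of v such that for each i with 1 ≤ i ≤ r(v) and r(v) − i − 1 ≥ 0, r(c_i) ≥ r(v) − i − 1. Then the number of nodes of T is at least F_{r(root) + 2}, where F denotes the Fibonacci numbers and root is the root of T. -/
/-- A finitely-branching rose tree whose nodes are labeled by natural-number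
ranks: a tree is a root node (with its rank) together with a finite list of
subtrees. -/
inductive RankTree : Type where
  | node : ℕ → List RankTree → RankTree

namespace RankTree

/-- The rank of the root node of a tree. -/
def rank : RankTree → ℕ
  | node r _ => r

/-- The list of subtrees rooted at the children of the root. -/
def children : RankTree → List RankTree
  | node _ cs => cs

/-- The number of nodes of a tree. -/
def size : RankTree → ℕ
  | node _ cs => 1 + (cs.attach.map (fun c => size c.1)).sum
decreasing_by
  have := List.sizeOf_lt_of_mem c.2
  cases c
  simp only [RankTree.node.sizeOf_spec] at *
  omega

/-- `IsNode v T` holds iff `v` is (the subtree rooted at) a node of `T`. -/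
inductive IsNode : RankTree → RankTree → Prop
  | refl (T : RankTree) : IsNode T T
  | child {v c T : RankTree} : c ∈ T.children → IsNode v c → IsNode v T

/-- A tree satisfies the rank invariant if every node `v` has `rank v`
pairwise distinct children `c_1, …, c_{rank v}` (given by an injection from
`Fin (rank v)` into the positions of the children of `v`) such that
`rank (c_i) ≥ rank v − i − 1` for `1 ≤ i ≤ rank v` (with truncated
subtraction, so the requirement is vacuous when `rank v − i − 1 < 0`). -/
def RankInvariant (T : RankTree) : Prop :=
  ∀ v : RankTree, IsNode v T →
    ∃ f : Fin v.rank → Fin v.children.length, Function.Injective f ∧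
      ∀ i : Fin v.rank, (v.children.get (f i)).rank ≥ v.rank - (i.val + 1) - 1

end RankTree

/-! By well-founded induction on the tree: if the root has rank `r`, its chosen children
`c_0, …, c_{r-1}` satisfy `rank c_i + 2 ≥ r - i`, so `c_i` has at least `F_{r-i}` nodes, and
`1 + F_1 + ⋯ + F_r = F_{r+2}`. -/

theorem Fintype.sum_comp_le_sum_of_injective {ι κ M : Type*} [Fintype ι] [Fintype κ]
    [AddCommMonoid M] [PartialOrder M] [CanonicallyOrderedAdd M] {f : ι → κ}
    (hf : Function.Injective f) (g : κ → M) : ∑ i, g (f i) ≤ ∑ j, g j := by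
  classical
  rw [← Finset.sum_image fun _ _ _ _ h => hf h]
  exact Finset.sum_le_sum_of_subset (Finset.subset_univ _)

theorem Nat.fib_add_two_eq_one_add_sum (r : ℕ) :
    Nat.fib (r + 2) = 1 + ∑ i : Fin r, Nat.fib (r - i) := by
  induction r with
  | zero => simp
  | succ r ih =>
    rw [Fin.sum_univ_succ, Nat.fib_add_two, ih]
    simp only [Fin.val_zero, Fin.val_succ, Nat.sub_zero, Nat.add_sub_add_right]
    ring

namespace RankTree

theorem size_node (r : ℕ) (cs : List RankTree) :
    (node r cs).size = 1 + (cs.map size).sum := by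
  rw [size, List.attach_map_val]

theorem size_eq_one_add_sum (T : RankTree) :
    T.size = 1 + ∑ j : Fin T.children.length, (T.children.get j).size := by
  obtain ⟨r, cs⟩ := T
  rw [size_node, ← Fin.sum_univ_fun_getElem]
  rfl

theorem size_lt_size_of_mem_children {c T : RankTree} (hc : c ∈ T.children) :
    c.size < T.size := by
  obtain ⟨r, cs⟩ := T
  rw [children] at hc
  have := List.le_sum_of_mem (List.mem_map_of_mem (f := size) hc)
  rw [size_node]
  omega

theorem one_add_sum_size_le_size (T : RankTree) {k : ℕ} {f : Fin k → Fin T.children.length}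
    (hf : Function.Injective f) : 1 + ∑ i, (T.children.get (f i)).size ≤ T.size := by
  rw [size_eq_one_add_sum]
  exact Nat.add_le_add_left (Fintype.sum_comp_le_sum_of_injective hf (size ∘ T.children.get)) 1

theorem RankInvariant.of_mem_children {c T : RankTree} (hT : T.RankInvariant)
    (hc : c ∈ T.children) : c.RankInvariant :=
  fun v hv => hT v (.child hc hv)

end RankTree

/-- In a finite rooted tree satisfying the rank invariant, the number of nodes
is at least `F_{rank(root) + 2}`, where `F` denotes the Fibonacci numbers. -/
theorem size_ge_fib_of_rankInvariant (T : RankTree) (hT : T.RankInvariant) :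
    T.size ≥ Nat.fib (T.rank + 2) := by
  obtain ⟨f, hf, hrank⟩ := hT T (.refl T)
  have hchild (i : Fin T.rank) : Nat.fib (T.rank - i) ≤ (T.children.get (f i)).size := by
    have hmem := T.children.get_mem (f i)
    calc Nat.fib (T.rank - i)
        ≤ Nat.fib ((T.children.get (f i)).rank + 2) := Nat.fib_mono (by have := hrank i; omega)
      _ ≤ (T.children.get (f i)).size :=
        size_ge_fib_of_rankInvariant _ (hT.of_mem_children hmem)
  calc Nat.fib (T.rank + 2)
      = 1 + ∑ i : Fin T.rank, Nat.fib (T.rank - i) := Nat.fib_add_two_eq_one_add_sum _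
    _ ≤ 1 + ∑ i, (T.children.get (f i)).size := by gcongr with i; exact hchild i
    _ ≤ T.size := T.one_add_sum_size_le_size hf
termination_by T.size
decreasing_by exact RankTree.size_lt_size_of_mem_children hmem
end
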